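/- arXiv:2208.02398 — 4 statements merged into one kernel-verified Lean document; each statement's English description precedes it below -/
import Mathlib

section
/- Let R be a Noetherian domain with fraction field K, R ≠ K, and let S be the integral closure of R in K. Then S is a finite R-module (i.e., R is N-1) if and only if the R-adic topology and the S-adic topology on K agree. -/
open Topology

/-- The collection `{aR + b : a ∈ K^×, b ∈ K}`, a basis for the `R`-adic topology. -/
def adicBasis {K : Type*} [Field K] (R : Subring K) : Set (Set K) :=
  {s | ∃ a b : K, a ≠ 0 ∧ s = {x | ∃ r ∈ R, x = a * r + b}}

/-- The `R`-adic topology on `K`: the topology with basis `{aR + b : a ∈ K^×, b ∈ K}`. -/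
def adicTopology {K : Type*} [Field K] (R : Subring K) : TopologicalSpace K :=
  TopologicalSpace.generateFrom (adicBasis R)

/-- `S` is a finite `R`-module: it is generated, as an `R`-module, by finitely many
elements of `S`. -/
def IsFiniteModuleOver {K : Type*} [Field K] (R S : Subring K) : Prop :=
  ∃ t : Finset K, (↑t : Set K) ⊆ (S : Set K) ∧
    ∀ s ∈ S, ∃ c : K → K, (∀ x ∈ t, c x ∈ R) ∧ s = ∑ x ∈ t, c x * x

/-! Both directions go through a conductor, a nonzero `c ∈ K` with `cS ⊆ R`. Finiteness of `S`
gives one by clearing the denominators of finitely many generators; conversely `S ≅ cS ⊆ R` is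
then a finitely generated `R`-module because `R` is Noetherian. A conductor refines every `aR + b`
into sets `acS + x`, so the topologies agree. Conversely, since `R` has fraction field `K`, the
sets `aS + b` form a basis (two of them through `x` contain `qq'S + x` for suitable denominators
`q, q'`), so if `R` is `S`-open it contains a basic set `aS + b ∋ 0`, which is `aS`, and `a` is a
conductor. -/

section AdicTopology

variable {K : Type*} [Field K]

def adicCoset (S : Subring K) (a b : K) : Set K := {x | ∃ r ∈ S, x = a * r + b}

lemma mem_adicCoset_self (S : Subring K) (a b : K) : b ∈ adicCoset S a b :=
  ⟨0, S.zero_mem, by ring⟩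

lemma adicCoset_eq_of_mem {S : Subring K} {a b x : K} (hx : x ∈ adicCoset S a b) :
    adicCoset S a b = adicCoset S a x := by
  obtain ⟨s₀, hs₀, rfl⟩ := hx
  ext y
  constructor
  · rintro ⟨s, hs, rfl⟩
    exact ⟨s - s₀, S.sub_mem hs hs₀, by ring⟩
  · rintro ⟨s, hs, rfl⟩
    exact ⟨s + s₀, S.add_mem hs hs₀, by ring⟩

lemma adicCoset_subset {S : Subring K} {a c : K} (ha : a ≠ 0) (hc : a⁻¹ * c ∈ S) (x : K) :
    adicCoset S c x ⊆ adicCoset S a x := by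
  rintro _ ⟨s, hs, rfl⟩
  exact ⟨a⁻¹ * c * s, S.mul_mem hc hs, by field_simp⟩

lemma isOpen_adicCoset (S : Subring K) {a : K} (ha : a ≠ 0) (b : K) :
    IsOpen[adicTopology S] (adicCoset S a b) :=
  TopologicalSpace.GenerateOpen.basic _ ⟨a, b, ha, rfl⟩

lemma isOpen_adicTopology_self (S : Subring K) : IsOpen[adicTopology S] (S : Set K) := by
  convert isOpen_adicCoset S one_ne_zero 0
  ext x
  exact ⟨fun hx => ⟨x, hx, by ring⟩, by rintro ⟨r, hr, rfl⟩; simpa using hr⟩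

lemma exists_ne_zero_inv_mul_mem {S : Subring K}
    (hS : ∀ x : K, ∃ a ∈ S, ∃ b ∈ S, b ≠ 0 ∧ x = a / b) (a : K) :
    ∃ q ∈ S, q ≠ 0 ∧ a⁻¹ * q ∈ S := by
  obtain ⟨p, hp, q, hq, hq0, hpq⟩ := hS a⁻¹
  exact ⟨q, hq, hq0, by rwa [hpq, div_mul_cancel₀ p hq0]⟩

lemma isTopologicalBasis_adicBasis {S : Subring K}
    (hS : ∀ x : K, ∃ a ∈ S, ∃ b ∈ S, b ≠ 0 ∧ x = a / b) :
    @TopologicalSpace.IsTopologicalBasis K (adicTopology S) (adicBasis S) := by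
  let := adicTopology S
  refine ⟨?_, ?_, rfl⟩
  · rintro _ ⟨a, b, ha, rfl⟩ _ ⟨a', b', ha', rfl⟩ x ⟨hx, hx'⟩
    obtain ⟨q, hq, hq0, haq⟩ := exists_ne_zero_inv_mul_mem hS a
    obtain ⟨q', hq', hq0', haq'⟩ := exists_ne_zero_inv_mul_mem hS a'
    refine ⟨adicCoset S (q * q') x, ⟨_, _, mul_ne_zero hq0 hq0', rfl⟩,
      mem_adicCoset_self S _ x, Set.subset_inter ?_ ?_⟩
    · change _ ⊆ adicCoset S a b
      rw [adicCoset_eq_of_mem hx]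
      exact adicCoset_subset ha (by simpa only [mul_assoc] using S.mul_mem haq hq') x
    · change _ ⊆ adicCoset S a' b'
      rw [adicCoset_eq_of_mem hx']
      exact adicCoset_subset ha' (by simpa only [mul_left_comm] using S.mul_mem hq haq') x
  · exact Set.eq_univ_of_forall fun x =>
      ⟨_, ⟨1, x, one_ne_zero, rfl⟩, mem_adicCoset_self S 1 x⟩

lemma adicTopology_le_of_mul_mem {T U : Subring K} {c : K} (hc : c ≠ 0)
    (h : ∀ t ∈ T, c * t ∈ U) : adicTopology T ≤ adicTopology U := by
  let := adicTopology T
  refine le_generateFrom ?_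
  rintro _ ⟨a, b, ha, rfl⟩
  refine isOpen_iff_forall_mem_open.2 fun x hx =>
    ⟨adicCoset T (a * c) x, ?_, isOpen_adicCoset T (mul_ne_zero ha hc) x,
      mem_adicCoset_self T _ x⟩
  change x ∈ adicCoset U a b at hx
  change _ ⊆ adicCoset U a b
  rw [adicCoset_eq_of_mem hx]
  rintro _ ⟨t, ht, rfl⟩
  exact ⟨c * t, h t ht, by ring⟩

lemma adicTopology_mono {T U : Subring K} (h : T ≤ U) : adicTopology T ≤ adicTopology U :=
  adicTopology_le_of_mul_mem one_ne_zero fun t ht => by simpa using h ht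

lemma exists_mul_mem_of_adicTopology_le {R S : Subring K}
    (hS : ∀ x : K, ∃ a ∈ S, ∃ b ∈ S, b ≠ 0 ∧ x = a / b)
    (h : adicTopology S ≤ adicTopology R) : ∃ c : K, c ≠ 0 ∧ ∀ s ∈ S, c * s ∈ R := by
  let := adicTopology S
  obtain ⟨_, ⟨a, b, ha, rfl⟩, h0, hR⟩ :=
    (isTopologicalBasis_adicBasis hS).exists_subset_of_mem_open R.zero_mem
      (h _ (isOpen_adicTopology_self R))
  change 0 ∈ adicCoset S a b at h0
  change adicCoset S a b ⊆ R at hR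
  rw [adicCoset_eq_of_mem h0] at hR
  exact ⟨a, ha, fun s hs => by simpa using hR ⟨s, hs, rfl⟩⟩

end AdicTopology

lemma Submodule.fg_of_mul_mem_one {R A : Type*} [CommRing R] [IsNoetherianRing R] [CommRing A]
    [IsDomain A] [Algebra R A] {M : Submodule R A} {c : A} (hc : c ≠ 0)
    (h : ∀ m ∈ M, c * m ∈ (1 : Submodule R A)) : M.FG := by
  have h1 : (1 : Submodule R A).FG := by
    rw [Submodule.one_eq_span]
    exact Submodule.fg_span_singleton 1
  refine Submodule.fg_of_fg_map_injective (LinearMap.mulLeft R c) (mul_right_injective₀ hc)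
    (h1.of_le ?_)
  rintro _ ⟨m, hm, rfl⟩
  exact h m hm

section Finiteness

variable {K : Type*} [Field K]

lemma exists_ne_zero_mul_mem_of_finset {R : Subring K}
    (hR : ∀ x : K, ∃ a ∈ R, ∃ b ∈ R, b ≠ 0 ∧ x = a / b) (t : Finset K) :
    ∃ c ∈ R, c ≠ 0 ∧ ∀ x ∈ t, c * x ∈ R := by
  classical
  induction t using Finset.induction_on with
  | empty => exact ⟨1, R.one_mem, one_ne_zero, by simp⟩
  | insert x t _ ih =>
    obtain ⟨c, hc, hc0, hct⟩ := ih
    obtain ⟨p, hp, q, hq, hq0, rfl⟩ := hR x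
    refine ⟨c * q, R.mul_mem hc hq, mul_ne_zero hc0 hq0, ?_⟩
    rintro y hy
    rcases Finset.mem_insert.1 hy with rfl | hy
    · rw [mul_assoc, mul_div_cancel₀ p hq0]
      exact R.mul_mem hc hp
    · rw [mul_right_comm]
      exact R.mul_mem (hct y hy) hq

lemma exists_mul_mem_of_isFiniteModuleOver {R S : Subring K}
    (hR : ∀ x : K, ∃ a ∈ R, ∃ b ∈ R, b ≠ 0 ∧ x = a / b) (h : IsFiniteModuleOver R S) :
    ∃ c : K, c ≠ 0 ∧ ∀ s ∈ S, c * s ∈ R := by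
  obtain ⟨t, -, hgen⟩ := h
  obtain ⟨c, -, hc0, hct⟩ := exists_ne_zero_mul_mem_of_finset hR t
  refine ⟨c, hc0, fun s hs => ?_⟩
  obtain ⟨f, hf, rfl⟩ := hgen s hs
  rw [Finset.mul_sum]
  exact R.sum_mem fun x hx => by
    rw [mul_left_comm]
    exact R.mul_mem (hf x hx) (hct x hx)

lemma isFiniteModuleOver_of_fg {R : Subring K} {A : Subalgebra R K}
    (h : (Subalgebra.toSubmodule A).FG) : IsFiniteModuleOver R A.toSubring := by
  obtain ⟨t, ht⟩ := h
  refine ⟨t, fun x hx => ?_, fun s hs => ?_⟩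
  · have hxA := Submodule.subset_span (R := R) hx
    rw [ht] at hxA
    exact hxA
  · have hsA : s ∈ Submodule.span R (t : Set K) := ht.symm ▸ hs
    obtain ⟨f, -, hf⟩ := Submodule.mem_span_finset.1 hsA
    exact ⟨fun x => f x, fun x _ => (f x).2, hf.symm⟩

end Finiteness

theorem statement3_general {K : Type*} [Field K] (R S : Subring K)
    (hNoeth : IsNoetherianRing ↥R)
    (hRfrac : ∀ x : K, ∃ a ∈ R, ∃ b ∈ R, b ≠ 0 ∧ x = a / b)
    (hSclosure : S = (integralClosure ↥R K).toSubring) :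
    IsFiniteModuleOver R S ↔ adicTopology R = adicTopology S := by
  subst hSclosure
  have hRS : R ≤ (integralClosure R K).toSubring := fun r hr =>
    (integralClosure R K).algebraMap_mem ⟨r, hr⟩
  have hSfrac : ∀ x : K, ∃ a ∈ (integralClosure R K).toSubring,
      ∃ b ∈ (integralClosure R K).toSubring, b ≠ 0 ∧ x = a / b := fun x => by
    obtain ⟨a, ha, b, hb, hb0, rfl⟩ := hRfrac x
    exact ⟨a, hRS ha, b, hRS hb, hb0, rfl⟩
  constructor
  · intro hfin
    obtain ⟨c, hc0, hc⟩ := exists_mul_mem_of_isFiniteModuleOver hRfrac hfin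
    exact (adicTopology_mono hRS).antisymm (adicTopology_le_of_mul_mem hc0 hc)
  · intro h
    obtain ⟨c, hc0, hc⟩ := exists_mul_mem_of_adicTopology_le hSfrac h.ge
    exact isFiniteModuleOver_of_fg (Submodule.fg_of_mul_mem_one hc0 fun m hm =>
      Submodule.mem_one.2 ⟨⟨_, hc m hm⟩, rfl⟩)

/-- Let `R` be a Noetherian domain with fraction field `K`, `R ≠ K`, and let
`S` be the integral closure of `R` in `K`. Then `S` is a finite `R`-module (i.e. `R` is N-1)
if and only if the `R`-adic and `S`-adic topologies on `K` agree. -/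
theorem statement3 {K : Type*} [Field K] (R S : Subring K)
    (hNoeth : IsNoetherianRing ↥R)
    (hR : R ≠ ⊤)
    (hRfrac : ∀ x : K, ∃ a ∈ R, ∃ b ∈ R, b ≠ 0 ∧ x = a / b)
    (hSclosure : S = (integralClosure ↥R K).toSubring) :
    IsFiniteModuleOver R S ↔ adicTopology R = adicTopology S :=
  statement3_general R S hNoeth hRfrac hSclosure
end

section
/- Let K be a field with a field topology τ. Then τ is gt-henselian if and only if for every n ≥ 1 and every τ-neighbourhood P ⊆ K of −1 there is a τ-neighbourhood O ⊆ K of 0 such that for all c₂, …, c_n ∈ O the polynomial 1 + X + c₂X² + … + c_nXⁿ has a root in P. -/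
/-!
`X^{n+1} + X^n + a_{n-1}X^{n-1} + … + a₀` is, up to the factor `X^{n+1}`, the reversal of
`1 + X + a_{n-1}X² + … + a₀X^{n+1}`, so `x ↦ x⁻¹` maps the nonzero roots of one family
bijectively onto those of the other. Inversion is continuous at `-1` and fixes it, so it pulls
neighbourhoods of `-1` back to neighbourhoods of `-1` (avoiding `0`, by `T1`), and the root
conditions for the two families in each degree `n + 1` are equivalent. In degree `1` the second
family is just `1 + X`, with root `-1`.
-/

open Topology

/-- A field topology is gt-henselian if for every `n ≥ 1` and every neighbourhood `P` of
`−1` there is a neighbourhood `O` of `0` such that for all `a₀, …, a_{n−1} ∈ O` the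
polynomial `X^{n+1} + X^n + a_{n−1}X^{n−1} + … + a₁X + a₀` has a root in `P`. -/
def GtHenselian (K : Type*) [Field K] [TopologicalSpace K] : Prop :=
  ∀ n : ℕ, 1 ≤ n → ∀ P ∈ nhds (-1 : K), ∃ O ∈ nhds (0 : K),
    ∀ a : ℕ → K, (∀ i < n, a i ∈ O) →
      ∃ x ∈ P, x ^ (n + 1) + x ^ n + ∑ i ∈ Finset.range n, a i * x ^ i = 0

open Finset

def GtHenselianAt (K : Type*) [Field K] [TopologicalSpace K] (n : ℕ) : Prop :=
  ∀ P ∈ 𝓝 (-1 : K), ∃ O ∈ 𝓝 (0 : K), ∀ a : ℕ → K, (∀ i < n, a i ∈ O) →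
    ∃ x ∈ P, x ^ (n + 1) + x ^ n + ∑ i ∈ range n, a i * x ^ i = 0

def ReversedHenselianAt (K : Type*) [Field K] [TopologicalSpace K] (n : ℕ) : Prop :=
  ∀ P ∈ 𝓝 (-1 : K), ∃ O ∈ 𝓝 (0 : K),
    ∀ c : ℕ → K, (∀ i, 2 ≤ i → i ≤ n → c i ∈ O) →
      ∃ x ∈ P, 1 + x + ∑ i ∈ Icc 2 n, c i * x ^ i = 0

section Reversal

variable {K : Type*} [Field K]

theorem pow_mul_reversed_eval {x : K} (hx : x ≠ 0) {n : ℕ} {a c : ℕ → K}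
    (hac : ∀ i < n, a i = c (n + 1 - i)) :
    x ^ (n + 1) * (1 + x⁻¹ + ∑ j ∈ Icc 2 (n + 1), c j * x⁻¹ ^ j) =
      x ^ (n + 1) + x ^ n + ∑ i ∈ range n, a i * x ^ i := by
  have hpow : ∀ j ≤ n + 1, x ^ (n + 1) * x⁻¹ ^ j = x ^ (n + 1 - j) := fun j hj => by
    rw [inv_pow, pow_sub₀ x hx hj]
  have hinv : x ^ (n + 1) * x⁻¹ = x ^ n := by simpa using hpow 1 (by omega)
  rw [mul_add, mul_add, mul_one, hinv, mul_sum]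
  congr 1
  refine sum_nbij' (fun j => n + 1 - j) (fun i => n + 1 - i) ?_ ?_ ?_ ?_ fun k hk => ?_
  iterate 4 intro k hk; simp only [mem_Icc, mem_range] at *; omega
  rw [mem_Icc] at hk
  rw [mul_left_comm, hpow k hk.2, hac _ (by omega), Nat.sub_sub_self hk.2]

theorem gtPoly_eq_zero_iff_reversed_inv {x : K} (hx : x ≠ 0) {n : ℕ} {a c : ℕ → K}
    (hac : ∀ i < n, a i = c (n + 1 - i)) :
    x ^ (n + 1) + x ^ n + ∑ i ∈ range n, a i * x ^ i = 0 ↔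
      1 + x⁻¹ + ∑ j ∈ Icc 2 (n + 1), c j * x⁻¹ ^ j = 0 := by
  rw [← pow_mul_reversed_eval hx hac, mul_eq_zero, or_iff_right (pow_ne_zero _ hx)]

end Reversal

theorem reversedHenselianAt_one {K : Type*} [Field K] [TopologicalSpace K] :
    ReversedHenselianAt K 1 := fun P hP =>
  ⟨Set.univ, Filter.univ_mem, fun _ _ => ⟨-1, mem_of_mem_nhds hP, by simp⟩⟩

theorem nonzero_inv_preimage_mem_nhds_neg_one {K : Type*} [DivisionRing K] [TopologicalSpace K]
    [ContinuousInv₀ K] [T1Space K] {P : Set K} (hP : P ∈ 𝓝 (-1 : K)) :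
    {x | x ≠ 0 ∧ x⁻¹ ∈ P} ∈ 𝓝 (-1 : K) :=
  Filter.inter_mem (isOpen_compl_singleton.mem_nhds (neg_ne_zero.2 one_ne_zero))
    (continuousAt_inv₀ (neg_ne_zero.2 one_ne_zero) (by rwa [inv_neg_one]))

section Henselian

variable {K : Type*} [Field K] [TopologicalSpace K] [ContinuousInv₀ K] [T1Space K]

theorem gtHenselianAt_iff_reversedHenselianAt (n : ℕ) :
    GtHenselianAt K n ↔ ReversedHenselianAt K (n + 1) := by
  constructor
  · intro h P hP
    obtain ⟨O, hO, hroot⟩ := h _ (nonzero_inv_preimage_mem_nhds_neg_one hP)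
    refine ⟨O, hO, fun c hc => ?_⟩
    obtain ⟨x, ⟨hx0, hxP⟩, hx⟩ := hroot (fun i => c (n + 1 - i))
      (fun i hi => hc _ (by omega) (by omega))
    exact ⟨x⁻¹, hxP, (gtPoly_eq_zero_iff_reversed_inv hx0 fun _ _ => rfl).1 hx⟩
  · intro h P hP
    obtain ⟨O, hO, hroot⟩ := h _ (nonzero_inv_preimage_mem_nhds_neg_one hP)
    refine ⟨O, hO, fun a ha => ?_⟩
    obtain ⟨x, ⟨hx0, hxP⟩, hx⟩ := hroot (fun j => a (n + 1 - j))
      (fun j hj _ => ha _ (by omega))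
    have hac : ∀ i < n, a i = a (n + 1 - (n + 1 - i)) := fun i hi => by
      rw [Nat.sub_sub_self (by omega)]
    refine ⟨x⁻¹, hxP, ?_⟩
    rwa [gtPoly_eq_zero_iff_reversed_inv (c := fun j => a (n + 1 - j)) (inv_ne_zero hx0) hac,
      inv_inv]

end Henselian

theorem statement13_general {K : Type*} [Field K] [TopologicalSpace K]
    [ContinuousInv₀ K] [T2Space K] :
    GtHenselian K ↔
      ∀ n : ℕ, 1 ≤ n → ∀ P ∈ nhds (-1 : K), ∃ O ∈ nhds (0 : K),
        ∀ c : ℕ → K, (∀ i, 2 ≤ i → i ≤ n → c i ∈ O) →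
          ∃ x ∈ P, 1 + x + ∑ i ∈ Finset.Icc 2 n, c i * x ^ i = 0 := by
  change (∀ n, 1 ≤ n → GtHenselianAt K n) ↔ ∀ n, 1 ≤ n → ReversedHenselianAt K n
  constructor
  · rintro h (_ | _ | n) hn
    · omega
    · exact reversedHenselianAt_one
    · exact (gtHenselianAt_iff_reversedHenselianAt _).1 (h _ (by omega))
  · exact fun h n _ => (gtHenselianAt_iff_reversedHenselianAt n).2 (h _ (by omega))

/-- A field topology is gt-henselian if and only if for every `n ≥ 1` and
every neighbourhood `P` of `−1` there is a neighbourhood `O` of `0` such that for all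
`c₂, …, c_n ∈ O` the polynomial `1 + X + c₂X² + … + c_nXⁿ` has a root in `P`. -/
theorem statement13 {K : Type*} [Field K] [TopologicalSpace K]
    [IsTopologicalRing K] [ContinuousInv₀ K] [T2Space K]
    (hnd : ¬ DiscreteTopology K) :
    GtHenselian K ↔
      ∀ n : ℕ, 1 ≤ n → ∀ P ∈ nhds (-1 : K), ∃ O ∈ nhds (0 : K),
        ∀ c : ℕ → K, (∀ i, 2 ≤ i → i ≤ n → c i ∈ O) →
          ∃ x ∈ P, 1 + x + ∑ i ∈ Finset.Icc 2 n, c i * x ^ i = 0 :=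
  statement13_general
end

section
/- Let K be a field with an ω-complete field topology τ. Then τ is gt-henselian if and only if τ admits a neighbourhood basis at 0 consisting of henselian ideals, i.e., of sets P ⊆ K such that P is the maximal ideal of some henselian local subring of K whose fraction field is K. -/
open Topology Polynomial

/-- A subset `P` of a field `K` is a henselian ideal if it is the maximal ideal of a
henselian local subring `R` of `K` with fraction field `K`.  This is spelled out as: `R` has
fraction field `K`; `P` is the set of nonunits of `R` (which, being closed under addition,
makes `R` local with maximal ideal `P`); and `R` is henselian: any polynomial over `R`
with a point `a ∈ R` where it vanishes mod `P` and its derivative is invertible has a root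
in `R` congruent to `a` mod `P`. -/
def IsHenselianIdeal {K : Type*} [Field K] (P : Set K) : Prop :=
  ∃ R : Subring K,
    (∀ x : K, ∃ a ∈ R, ∃ b ∈ R, b ≠ 0 ∧ x = a / b) ∧
    P = {x : K | x ∈ R ∧ ∀ y ∈ R, x * y ≠ 1} ∧
    (∀ x ∈ P, ∀ y ∈ P, x + y ∈ P) ∧
    (∀ f : K[X], (∀ i : ℕ, f.coeff i ∈ R) → ∀ a ∈ R,
      f.eval a ∈ P → f.derivative.eval a ∉ P →
        ∃ b ∈ R, f.eval b = 0 ∧ b - a ∈ P)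

/-! Forward direction: since the topology is ω-complete, a neighbourhood of `0` can be shrunk
countably often, each step taking care of `+`, `·`, `-`, `a ↦ (1 + a)⁻¹ - 1`, multiplication
by the (countable) prime field `F` and the gt-henselian root condition. The intersection `m` of
such a chain avoiding `1` is a neighbourhood of `0` closed under all of these; the gt-roots
found along the chain can be taken to be one and the same, as a polynomial has finitely many
roots. Then `F + m` is a local ring with maximal ideal `m`, and Hensel's lemma for it reduces,
after a Taylor shift and a rescaling that makes the two lowest coefficients `1`, to the
reversed polynomials `X ^ (n + 1) + X ^ n + ∑ aᵢ Xⁱ` with `aᵢ ∈ m`. Since `K` is not discrete,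
every `x` is `(x y) / y` for some nonzero `y ∈ m` with `x y ∈ m`.

Converse: Hensel's lemma at `-1` applies to `X ^ n * (X + 1) + ∑ aᵢ Xⁱ` with `aᵢ` in a
henselian ideal, as its derivative at `-1` is `(-1) ^ n` modulo that ideal. -/

open Filter Set

theorem Polynomial.eval_mem_of_coeff_mem {R S : Type*} [Semiring R] [SetLike S R]
    [SubsemiringClass S R] {s : S} {p : R[X]} (hp : ∀ i, p.coeff i ∈ s) {x : R} (hx : x ∈ s) :
    p.eval x ∈ s := by
  rw [eval_eq_sum_range]
  exact sum_mem fun i _ => mul_mem (hp i) (pow_mem hx i)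

theorem Subfield.mem_bot_iff {K : Type*} [Field K] {x : K} :
    x ∈ (⊥ : Subfield K) ↔ ∃ z w : ℤ, (z : K) / w = x := by
  simp [← Subfield.closure_empty, Subfield.mem_closure_iff, Subring.closure_empty, Subring.mem_bot]

theorem Subfield.countable_bot (K : Type*) [Field K] : ((⊥ : Subfield K) : Set K).Countable :=
  (countable_range fun p : ℤ × ℤ => (p.1 : K) / p.2).mono fun x hx => by
    obtain ⟨z, w, rfl⟩ := Subfield.mem_bot_iff.1 hx
    exact ⟨(z, w), rfl⟩

theorem countableInterFilter_of_iInter_mem {α : Type*} {l : Filter α}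
    (h : ∀ f : ℕ → Set α, (∀ n, f n ∈ l) → ⋂ n, f n ∈ l) : CountableInterFilter l := by
  refine ⟨fun S hS hSl => ?_⟩
  rcases S.eq_empty_or_nonempty with rfl | hne
  · simp
  obtain ⟨f, rfl⟩ := hS.exists_eq_range hne
  rw [sInter_range]
  exact h f fun n => hSl _ (mem_range_self n)

theorem Filter.exists_seq_of_forall_exists {α : Type*} {l : Filter α}
    {Q : Set α → Set α → Prop} (h : ∀ V ∈ l, ∃ W ∈ l, Q W V) {U : Set α} (hU : U ∈ l) :
    ∃ M : ℕ → Set α, M 0 = U ∧ (∀ k, M k ∈ l) ∧ ∀ k, Q (M (k + 1)) (M k) := by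
  choose! W hW hQ using h
  have hM (k : ℕ) : W^[k] U ∈ l := by
    induction k with
    | zero => exact hU
    | succ k ih => rw [Function.iterate_succ_apply']; exact hW _ ih
  refine ⟨fun k => W^[k] U, rfl, hM, fun k => ?_⟩
  simpa only [Function.iterate_succ_apply'] using hQ _ (hM k)

theorem Set.Finite.inter_iInter_nonempty {α : Type*} {S : Set α} (hS : S.Finite) {M : ℕ → Set α}
    (hM : Antitone M) (h : ∀ k, (S ∩ M k).Nonempty) : (S ∩ ⋂ k, M k).Nonempty := by
  choose x hxS hxM using h
  have := hS.to_subtype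
  obtain ⟨⟨s, hs⟩, hfiber⟩ := Finite.exists_infinite_fiber fun k => (⟨x k, hxS k⟩ : S)
  refine ⟨s, hs, mem_iInter.2 fun k => ?_⟩
  obtain ⟨j, hj, hkj⟩ := (Set.infinite_coe_iff.1 hfiber).exists_gt k
  simp only [mem_preimage, mem_singleton_iff, Subtype.mk.injEq] at hj
  exact hj ▸ hM hkj.le (hxM j)

section Topology

variable {K : Type*} [Field K] [TopologicalSpace K]

theorem exists_mem_ne_zero_of_not_discreteTopology [IsTopologicalAddGroup K]
    (hnd : ¬ DiscreteTopology K) {s : Set K} (hs : s ∈ 𝓝 0) : ∃ y ∈ s, y ≠ 0 := by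
  by_contra! h
  refine hnd (discreteTopology_of_isOpen_singleton_zero ?_)
  rw [isOpen_singleton_iff_nhds_eq_pure]
  exact le_antisymm (le_pure_iff.2 (mem_of_superset hs h)) (pure_le_nhds 0)

theorem exists_mem_nhds_zero_mul_mem {M : Type*} [TopologicalSpace M] [MulZeroClass M]
    [ContinuousMul M] {V : Set M} (hV : V ∈ 𝓝 0) : ∃ W ∈ 𝓝 (0 : M), ∀ a ∈ W, ∀ b ∈ W, a * b ∈ V := by
  have : (fun p : M × M => p.1 * p.2) ⁻¹' V ∈ 𝓝 ((0 : M), (0 : M)) :=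
    tendsto_mul (by simpa using hV)
  obtain ⟨W, hWo, hW0, hW⟩ := exists_nhds_square this
  exact ⟨W, hWo.mem_nhds hW0, fun a ha b hb => hW (mk_mem_prod ha hb)⟩

theorem exists_ne_zero_mul_mem [IsTopologicalRing K] (hnd : ¬ DiscreteTopology K) {m : Set K}
    (hm : m ∈ 𝓝 0) (x : K) : ∃ y ∈ m, y ≠ 0 ∧ x * y ∈ m := by
  have hxm : (x * ·) ⁻¹' m ∈ 𝓝 0 := (continuous_const_mul x).tendsto' 0 0 (mul_zero x) hm
  obtain ⟨y, ⟨hy, hxy⟩, hy0⟩ := exists_mem_ne_zero_of_not_discreteTopology hnd (inter_mem hm hxm)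
  exact ⟨y, hy, hy0, hxy⟩

end Topology

section GtPoly

variable {K : Type*} [Field K]

noncomputable def gtPoly (n : ℕ) (a : ℕ → K) : K[X] :=
  X ^ n * (X + 1) + ∑ i ∈ Finset.range n, C (a i) * X ^ i

theorem eval_gtPoly (n : ℕ) (a : ℕ → K) (x : K) :
    (gtPoly n a).eval x = x ^ (n + 1) + x ^ n + ∑ i ∈ Finset.range n, a i * x ^ i := by
  simp only [gtPoly, eval_add, eval_mul, eval_pow, eval_X, eval_one, eval_finsetSum, eval_C,
    add_left_inj]
  ring

theorem gtPoly_ne_zero (n : ℕ) (a : ℕ → K) : gtPoly n a ≠ 0 := by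
  intro h
  have := congrArg (coeff · (n + 1)) h
  simp [gtPoly, coeff_X_pow, finsetSum_coeff, mul_add] at this

theorem gtPoly_coeff_mem {R : Subring K} {n : ℕ} {a : ℕ → K} (ha : ∀ i < n, a i ∈ R) (j : ℕ) :
    (gtPoly n a).coeff j ∈ R := by
  have hX := X_mem_lifts R.subtype
  have : gtPoly n a ∈ lifts R.subtype :=
    add_mem (mul_mem (pow_mem hX n) (add_mem hX (one_mem _))) <|
      sum_mem fun i hi => mul_mem (C_mem_lifts R.subtype ⟨a i, ha i (Finset.mem_range.1 hi)⟩)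
        (pow_mem hX i)
  simpa using (lifts_iff_coeff_lifts _).1 this j

def HasGtRoots (m : Set K) : Prop :=
  ∀ n, 1 ≤ n → ∀ a : ℕ → K, (∀ i < n, a i ∈ m) → ∃ x, x + 1 ∈ m ∧ (gtPoly n a).IsRoot x

end GtPoly

section NhdsForm

variable {K : Type*} [Field K] [TopologicalSpace K]

theorem gtHenselian_iff [IsTopologicalAddGroup K] :
    GtHenselian K ↔ ∀ n, 1 ≤ n → ∀ V ∈ 𝓝 (0 : K), ∃ O ∈ 𝓝 (0 : K),
      ∀ a : ℕ → K, (∀ i < n, a i ∈ O) → ∃ x, x + 1 ∈ V ∧ (gtPoly n a).IsRoot x := by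
  simp only [GtHenselian, ← nhds_translation_add_neg (-1 : K), mem_comap, neg_neg, IsRoot,
    eval_gtPoly]
  refine ⟨fun h n hn V hV => h n hn _ ⟨V, hV, subset_rfl⟩, fun h n hn P ⟨V, hV, hVP⟩ => ?_⟩
  obtain ⟨O, hO, hroots⟩ := h n hn V hV
  exact ⟨O, hO, fun a ha => let ⟨x, hx, hroot⟩ := hroots a ha; ⟨x, hVP hx, hroot⟩⟩

theorem gtHenselian_of_hasGtRoots [IsTopologicalAddGroup K]
    (h : ∀ U ∈ 𝓝 (0 : K), ∃ P ∈ 𝓝 (0 : K), P ⊆ U ∧ HasGtRoots P) : GtHenselian K := by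
  refine gtHenselian_iff.2 fun n hn V hV => ?_
  obtain ⟨P, hP, hPV, hroots⟩ := h V hV
  exact ⟨P, hP, fun a ha => (hroots n hn a ha).imp fun x hx => ⟨hPV hx.1, hx.2⟩⟩

end NhdsForm

theorem IsHenselianIdeal.hasGtRoots {K : Type*} [Field K] {P : Set K} (hP : IsHenselianIdeal P) :
    HasGtRoots P := by
  obtain ⟨R, -, hPR, hadd, hhen⟩ := hP
  have nonunit : ∀ x ∈ P, ∀ y ∈ R, x * y ≠ 1 := fun x hx => (hPR ▸ hx).2
  have mul_mem : ∀ x ∈ P, ∀ r ∈ R, x * r ∈ P := fun x hx r hr => by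
    rw [hPR] at hx ⊢
    exact ⟨R.mul_mem hx.1 hr, fun y hy h => hx.2 (r * y) (R.mul_mem hr hy) (by rw [← h, mul_assoc])⟩
  have hneg1 : (-1 : K) ∈ R := R.neg_mem R.one_mem
  obtain ⟨I, rfl⟩ : ∃ I : AddSubgroup K, (I : Set K) = P :=
    ⟨{ carrier := P
       add_mem' := fun ha hb => hadd _ ha _ hb
       zero_mem' := by rw [hPR]; exact ⟨R.zero_mem, by simp⟩
       neg_mem' := fun hx => by simpa using mul_mem _ hx _ hneg1 }, rfl⟩
  intro n hn a ha
  set g : K[X] := ∑ i ∈ Finset.range n, C (a i) * X ^ i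
  have hg : g.eval (-1) ∈ I ∧ g.derivative.eval (-1) ∈ I := by
    simp only [g, eval_finsetSum, derivative_sum, derivative_C_mul_X_pow, eval_mul, eval_C,
      eval_pow, eval_X]
    refine ⟨sum_mem fun i hi => ?_, sum_mem fun i hi => ?_⟩
    · exact mul_mem _ (ha i (Finset.mem_range.1 hi)) _ (R.pow_mem hneg1 i)
    · rw [mul_assoc]
      exact mul_mem _ (ha i (Finset.mem_range.1 hi)) _
        (R.mul_mem (natCast_mem R i) (R.pow_mem hneg1 _))
  have heval : (gtPoly n a).eval (-1) = g.eval (-1) := by simp [gtPoly, g]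
  have hderiv : (gtPoly n a).derivative.eval (-1) = (-1) ^ n + g.derivative.eval (-1) := by
    simp [gtPoly, g, derivative_mul]
  have hcoeff : ∀ j, (gtPoly n a).coeff j ∈ R :=
    gtPoly_coeff_mem fun i hi => (hPR ▸ ha i hi :).1
  obtain ⟨b, -, hb, hb1⟩ := hhen (gtPoly n a) hcoeff (-1) hneg1 (heval ▸ hg.1) fun h => by
    have hunit : (-1 : K) ^ n ∈ I := by simpa [hderiv] using I.sub_mem h hg.2
    exact nonunit _ hunit _ (R.pow_mem hneg1 n) (by rw [← mul_pow]; simp)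
  exact ⟨b, by simpa using hb1, hb⟩

open scoped Pointwise

section LocalIdeal

variable {K : Type*} [Field K]

/-- Conditions making `(⊥ : Subfield K) + m` a local ring with maximal ideal `m`. -/
structure IsLocalIdealOverPrimeField (m : NonUnitalSubring K) : Prop where
  one_notMem : (1 : K) ∉ m
  mul_mem_of_mem_bot : ∀ q ∈ (⊥ : Subfield K), ∀ c ∈ m, q * c ∈ m
  inv_one_add_sub_one_mem : ∀ c ∈ m, (1 + c)⁻¹ - 1 ∈ m

namespace IsLocalIdealOverPrimeField

variable {m : NonUnitalSubring K} (hm : IsLocalIdealOverPrimeField m)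
include hm

theorem inv_add_one_mem {x : K} (hx : x + 1 ∈ m) : x⁻¹ + 1 ∈ m := by
  have h := neg_mem (hm.inv_one_add_sub_one_mem _ (neg_mem hx))
  rwa [show 1 + -(x + 1) = -x by ring, inv_neg, neg_sub, sub_neg_eq_add, add_comm] at h

def subring : Subring K where
  carrier := ((⊥ : Subfield K) : Set K) + m
  zero_mem' := ⟨0, zero_mem _, 0, zero_mem m, add_zero 0⟩
  one_mem' := ⟨1, one_mem _, 0, zero_mem m, add_zero 1⟩
  add_mem' := by
    rintro _ _ ⟨q, hq, c, hc, rfl⟩ ⟨q', hq', c', hc', rfl⟩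
    exact ⟨q + q', add_mem hq hq', c + c', add_mem hc hc', by ring⟩
  neg_mem' := by
    rintro _ ⟨q, hq, c, hc, rfl⟩
    exact ⟨-q, neg_mem hq, -c, neg_mem hc, by ring⟩
  mul_mem' := by
    rintro _ _ ⟨q, hq, c, hc, rfl⟩ ⟨q', hq', c', hc', rfl⟩
    refine ⟨q * q', mul_mem hq hq', q * c' + q' * c + c * c', ?_, by ring⟩
    exact add_mem (add_mem (hm.mul_mem_of_mem_bot q hq c' hc') (hm.mul_mem_of_mem_bot q' hq' c hc))
      (mul_mem hc hc')

theorem mem_subring_of_mem {c : K} (hc : c ∈ m) : c ∈ hm.subring :=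
  ⟨0, zero_mem _, c, hc, zero_add c⟩

theorem mem_subring_of_add_one_mem {x : K} (hx : x + 1 ∈ m) : x ∈ hm.subring :=
  ⟨-1, neg_mem (one_mem _), x + 1, hx, by ring⟩

theorem mul_mem_of_mem_subring {c x : K} (hc : c ∈ m) (hx : x ∈ hm.subring) : c * x ∈ m := by
  obtain ⟨q, hq, d, hd, rfl⟩ := hx
  rw [mul_add, mul_comm]
  exact add_mem (hm.mul_mem_of_mem_bot q hq c hc) (mul_mem hc hd)

theorem exists_mul_eq_one {x : K} (hx : x ∈ hm.subring) (hxm : x ∉ m) :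
    ∃ y ∈ hm.subring, x * y = 1 := by
  obtain ⟨q, hq, c, hc, rfl⟩ := hx
  dsimp only at hxm ⊢
  have hq0 : q ≠ 0 := by rintro rfl; simp_all
  have hx0 : q + c ≠ 0 := fun h => hxm (h ▸ zero_mem m)
  have hqc : q⁻¹ * c ∈ m := hm.mul_mem_of_mem_bot _ (inv_mem hq) c hc
  refine ⟨(q + c)⁻¹, ⟨q⁻¹, inv_mem hq, q⁻¹ * ((1 + q⁻¹ * c)⁻¹ - 1),
    hm.mul_mem_of_mem_bot _ (inv_mem hq) _ (hm.inv_one_add_sub_one_mem _ hqc), ?_⟩,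
    mul_inv_cancel₀ hx0⟩
  field_simp
  ring

theorem coe_eq_nonunits : (m : Set K) = {x | x ∈ hm.subring ∧ ∀ y ∈ hm.subring, x * y ≠ 1} := by
  ext x
  refine ⟨fun hx => ⟨hm.mem_subring_of_mem hx, fun y hy hxy => ?_⟩, fun ⟨hx, hxu⟩ => ?_⟩
  · exact hm.one_notMem (hxy ▸ hm.mul_mem_of_mem_subring hx hy)
  · by_contra hxm
    obtain ⟨y, hy, hxy⟩ := hm.exists_mul_eq_one hx hxm
    exact hxu y hy hxy

theorem exists_isRoot_of_coeff_zero_eq_one (hgt : HasGtRoots (m : Set K)) {h : K[X]}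
    (h0 : h.coeff 0 = 1) (h1 : h.coeff 1 = 1) (hcoeff : ∀ j, 2 ≤ j → h.coeff j ∈ m) :
    ∃ z, z + 1 ∈ m ∧ h.IsRoot z := by
  set n := h.natDegree + 1
  obtain ⟨x, hx, hroot⟩ := hgt n (by omega) (fun i => h.coeff (n + 1 - i)) fun i hi =>
    hcoeff _ (by omega)
  have hx0 : x ≠ 0 := by rintro rfl; exact hm.one_notMem (by simpa using hx)
  refine ⟨x⁻¹, hm.inv_add_one_mem hx, ?_⟩
  -- `x ^ (n + 1) * h (x⁻¹)` is the reversed polynomial of `h`, evaluated at `x`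
  have hterm : ∀ i ≤ n + 1, h.coeff (n + 2 - 1 - i) * x⁻¹ ^ (n + 2 - 1 - i) * x ^ (n + 1) =
      h.coeff (n + 1 - i) * x ^ i := fun i hi => by
    rw [show n + 2 - 1 - i = n + 1 - i by omega, mul_assoc, ← pow_sub_mul_pow x hi, inv_pow,
      inv_mul_cancel_left₀ (pow_ne_zero _ hx0)]
  have hrev : h.eval x⁻¹ * x ^ (n + 1) = (gtPoly n fun i => h.coeff (n + 1 - i)).eval x := by
    rw [eval_eq_sum_range' (n := n + 2) (by omega), Finset.sum_mul,
      ← Finset.sum_range_reflect, eval_gtPoly, Finset.sum_range_succ, Finset.sum_range_succ,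
      Finset.sum_congr rfl fun i hi => hterm i (by simp at hi; omega), hterm n (by omega),
      hterm (n + 1) le_rfl]
    simp only [add_tsub_cancel_left, h1, one_mul, tsub_self, h0]
    ring
  rw [IsRoot, ← mul_eq_zero_iff_right (pow_ne_zero (n + 1) hx0), hrev]
  exact hroot

theorem exists_isRoot_mem (hgt : HasGtRoots (m : Set K)) {g : K[X]}
    (hg : ∀ j, g.coeff j ∈ hm.subring) (h0 : g.coeff 0 ∈ m) (h1 : g.coeff 1 ∉ m) :
    ∃ y ∈ m, g.IsRoot y := by
  by_cases hc0 : g.coeff 0 = 0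
  · exact ⟨0, zero_mem m, by rwa [IsRoot, ← coeff_zero_eq_eval_zero]⟩
  obtain ⟨u, hu, hc1u⟩ := hm.exists_mul_eq_one (hg 1) h1
  set t := g.coeff 0 * u
  have ht : t ∈ m := hm.mul_mem_of_mem_subring h0 hu
  -- rescaling by `t` normalises the two lowest coefficients to `1`
  obtain ⟨z, hz, hroot⟩ := hm.exists_isRoot_of_coeff_zero_eq_one hgt
    (h := C (g.coeff 0)⁻¹ * g.comp (C t * X)) (by simp [hc0])
    (by simp only [coeff_C_mul, comp_C_mul_X_coeff, pow_one, t]; field_simp; exact hc1u)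
    fun j hj => by
      obtain ⟨k, rfl⟩ : ∃ k, j = k + 2 := ⟨j - 2, by omega⟩
      have hR : t ^ k * (g.coeff (k + 2) * u) ∈ hm.subring :=
        mul_mem (pow_mem (hm.mem_subring_of_mem ht) k) (mul_mem (hg _) hu)
      convert hm.mul_mem_of_mem_subring ht hR using 1
      simp only [coeff_C_mul, comp_C_mul_X_coeff, t]
      field_simp
      ring
  refine ⟨t * z, hm.mul_mem_of_mem_subring ht (hm.mem_subring_of_add_one_mem hz), ?_⟩
  simpa [hc0] using hroot

theorem exists_eval_eq_zero (hgt : HasGtRoots (m : Set K)) {f : K[X]}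
    (hf : ∀ i, f.coeff i ∈ hm.subring) {α : K} (hα : α ∈ hm.subring) (h0 : f.eval α ∈ m)
    (h1 : f.derivative.eval α ∉ m) : ∃ b ∈ hm.subring, f.eval b = 0 ∧ b - α ∈ m := by
  have htaylor (j : ℕ) : (taylor α f).coeff j ∈ hm.subring := by
    rw [taylor_coeff]
    refine eval_mem_of_coeff_mem (fun i => ?_) hα
    rw [hasseDeriv_coeff]
    exact mul_mem (natCast_mem _ _) (hf _)
  obtain ⟨y, hy, hroot⟩ := hm.exists_isRoot_mem hgt htaylor (by rwa [taylor_coeff_zero])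
    (by rwa [taylor_coeff_one])
  exact ⟨y + α, add_mem (hm.mem_subring_of_mem hy) hα, by rwa [← taylor_eval], by simpa⟩

theorem isHenselianIdeal (hgt : HasGtRoots (m : Set K))
    (hfrac : ∀ x : K, ∃ y ∈ m, y ≠ 0 ∧ x * y ∈ m) : IsHenselianIdeal (m : Set K) := by
  refine ⟨hm.subring, fun x => ?_, hm.coe_eq_nonunits, fun x hx y hy => add_mem hx hy,
    fun f hf α hα h0 h1 => hm.exists_eval_eq_zero hgt hf hα h0 h1⟩
  obtain ⟨y, hy, hy0, hxy⟩ := hfrac x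
  exact ⟨x * y, hm.mem_subring_of_mem hxy, y, hm.mem_subring_of_mem hy, hy0,
    (mul_div_cancel_right₀ x hy0).symm⟩

end IsLocalIdealOverPrimeField

end LocalIdeal

section Refinement

variable {K : Type*} [Field K]

structure Refines (W V : Set K) : Prop where
  subset : W ⊆ V
  add_mem : ∀ a ∈ W, ∀ b ∈ W, a + b ∈ V
  mul_mem : ∀ a ∈ W, ∀ b ∈ W, a * b ∈ V
  neg_mem : ∀ a ∈ W, -a ∈ V
  inv_one_add_sub_one_mem : ∀ a ∈ W, (1 + a)⁻¹ - 1 ∈ V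
  mul_mem_of_mem_bot : ∀ q ∈ (⊥ : Subfield K), ∀ a ∈ W, q * a ∈ V
  exists_isRoot : ∀ n, 1 ≤ n → ∀ a : ℕ → K, (∀ i < n, a i ∈ W) →
    ∃ x, x + 1 ∈ V ∧ (gtPoly n a).IsRoot x

section Sequence

variable {M : ℕ → Set K} (hM : ∀ k, Refines (M (k + 1)) (M k))
include hM

def nonUnitalSubringOfRefines (h0 : ∀ k, (0 : K) ∈ M k) : NonUnitalSubring K where
  carrier := ⋂ k, M k
  zero_mem' := mem_iInter.2 h0
  add_mem' ha hb :=
    mem_iInter.2 fun k => (hM k).add_mem _ (mem_iInter.1 ha (k + 1)) _ (mem_iInter.1 hb (k + 1))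
  mul_mem' ha hb :=
    mem_iInter.2 fun k => (hM k).mul_mem _ (mem_iInter.1 ha (k + 1)) _ (mem_iInter.1 hb (k + 1))
  neg_mem' ha := mem_iInter.2 fun k => (hM k).neg_mem _ (mem_iInter.1 ha (k + 1))

theorem isLocalIdealOverPrimeField_nonUnitalSubringOfRefines (h0 : ∀ k, (0 : K) ∈ M k)
    (h1 : (1 : K) ∉ M 0) : IsLocalIdealOverPrimeField (nonUnitalSubringOfRefines hM h0) where
  one_notMem h := h1 (mem_iInter.1 h 0)
  mul_mem_of_mem_bot q hq c hc :=
    mem_iInter.2 fun k => (hM k).mul_mem_of_mem_bot q hq c (mem_iInter.1 hc (k + 1))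
  inv_one_add_sub_one_mem c hc :=
    mem_iInter.2 fun k => (hM k).inv_one_add_sub_one_mem c (mem_iInter.1 hc (k + 1))

theorem hasGtRoots_iInter_of_refines : HasGtRoots (⋂ k, M k) := by
  intro n hn a ha
  have hanti : Antitone M := antitone_nat_of_succ_le fun k => (hM k).subset
  obtain ⟨x, hroot, hx⟩ := (finite_setOfPred_isRoot (gtPoly_ne_zero n a)).inter_iInter_nonempty
    (M := fun k => (· + 1) ⁻¹' M k) (fun i j hij => preimage_mono (hanti hij)) fun k => by
      obtain ⟨x, hx, hroot⟩ := (hM k).exists_isRoot n hn a fun i hi => mem_iInter.1 (ha i hi) (k + 1)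
      exact ⟨x, hroot, hx⟩
  exact ⟨x, by simpa using hx, hroot⟩

end Sequence

variable [TopologicalSpace K] [IsTopologicalRing K]

theorem GtHenselian.exists_refines [ContinuousInv₀ K] [CountableInterFilter (𝓝 (0 : K))]
    (hgt : GtHenselian K) {V : Set K} (hV : V ∈ 𝓝 0) : ∃ W ∈ 𝓝 (0 : K), Refines W V := by
  obtain ⟨W₁, hW₁, hadd⟩ := exists_nhds_zero_half hV
  obtain ⟨W₂, hW₂, hmul⟩ := exists_mem_nhds_zero_mul_mem hV
  have hneg : ∀ᶠ a in 𝓝 (0 : K), -a ∈ V := continuous_neg.tendsto' 0 0 neg_zero hV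
  have hinv : ∀ᶠ a in 𝓝 (0 : K), (1 + a)⁻¹ - 1 ∈ V := by
    have : ContinuousAt (fun a : K => (1 + a)⁻¹ - 1) 0 := by fun_prop (disch := norm_num)
    exact this.tendsto (by simpa using hV)
  have hbot : ∀ᶠ a in 𝓝 (0 : K), ∀ q ∈ (⊥ : Subfield K), q * a ∈ V :=
    (eventually_countable_ball (Subfield.countable_bot K)).2 fun q _ =>
      (continuous_const_mul q).tendsto' 0 0 (mul_zero q) hV
  choose! O hO hroots using fun n (hn : 1 ≤ n) => gtHenselian_iff.1 hgt n hn V hV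
  have hgt' : ∀ᶠ a in 𝓝 (0 : K), ∀ n ∈ {n | 1 ≤ n}, a ∈ O n :=
    (eventually_countable_ball (to_countable _)).2 hO
  refine ⟨{a | a ∈ V ∧ a ∈ W₁ ∧ a ∈ W₂ ∧ -a ∈ V ∧ (1 + a)⁻¹ - 1 ∈ V ∧
    (∀ q ∈ (⊥ : Subfield K), q * a ∈ V) ∧ ∀ n ∈ {n | 1 ≤ n}, a ∈ O n}, ?_,
    ⟨fun a ha => ha.1, fun a ha b hb => hadd a ha.2.1 b hb.2.1,
      fun a ha b hb => hmul a ha.2.2.1 b hb.2.2.1, fun a ha => ha.2.2.2.1,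
      fun a ha => ha.2.2.2.2.1, fun q hq a ha => ha.2.2.2.2.2.1 q hq,
      fun n hn a ha => hroots n hn a fun i hi => (ha i hi).2.2.2.2.2.2 n hn⟩⟩
  filter_upwards [hV, hW₁, hW₂, hneg, hinv, hbot, hgt'] with a h₁ h₂ h₃ h₄ h₅ h₆ h₇
    using ⟨h₁, h₂, h₃, h₄, h₅, h₆, h₇⟩

theorem GtHenselian.exists_isLocalIdealOverPrimeField [ContinuousInv₀ K] [T1Space K]
    [CountableInterFilter (𝓝 (0 : K))] (hgt : GtHenselian K) {U : Set K} (hU : U ∈ 𝓝 0) :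
    ∃ m : NonUnitalSubring K, (m : Set K) ∈ 𝓝 0 ∧ (m : Set K) ⊆ U ∧
      IsLocalIdealOverPrimeField m ∧ HasGtRoots (m : Set K) := by
  obtain ⟨M, hM0, hMnhds, hM⟩ := exists_seq_of_forall_exists (fun V hV => hgt.exists_refines hV)
    (inter_mem hU (compl_singleton_mem_nhds (zero_ne_one' K)))
  have h0 (k : ℕ) : (0 : K) ∈ M k := mem_of_mem_nhds (hMnhds k)
  refine ⟨nonUnitalSubringOfRefines hM h0, countable_iInter_mem.2 hMnhds,
    (iInter_subset M 0).trans (hM0 ▸ inter_subset_left),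
    isLocalIdealOverPrimeField_nonUnitalSubringOfRefines hM h0 ?_,
    hasGtRoots_iInter_of_refines hM⟩
  rw [hM0]
  exact fun h => h.2 rfl

end Refinement

/-- An ω-complete field topology is gt-henselian if and only if it admits a
neighbourhood basis at `0` consisting of henselian ideals. -/
theorem statement15 {K : Type*} [Field K] [TopologicalSpace K]
    [IsTopologicalRing K] [ContinuousInv₀ K] [T2Space K]
    (hnd : ¬ DiscreteTopology K)
    (hω : ∀ f : ℕ → Set K, (∀ n, f n ∈ nhds (0 : K)) → (⋂ n, f n) ∈ nhds (0 : K)) :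
    GtHenselian K ↔
      ∀ U ∈ nhds (0 : K), ∃ P, P ∈ nhds (0 : K) ∧ P ⊆ U ∧ IsHenselianIdeal P := by
  have : CountableInterFilter (𝓝 (0 : K)) := countableInterFilter_of_iInter_mem hω
  refine ⟨fun hgt U hU => ?_, fun h => gtHenselian_of_hasGtRoots fun U hU => ?_⟩
  · obtain ⟨m, hm0, hmU, hm, hroots⟩ := hgt.exists_isLocalIdealOverPrimeField hU
    exact ⟨m, hm0, hmU, hm.isHenselianIdeal hroots (exists_ne_zero_mul_mem hnd hm0)⟩
  · obtain ⟨P, hP0, hPU, hP⟩ := h U hU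
    exact ⟨P, hP0, hPU, hP.hasGtRoots⟩
end

section
/- Let R be a domain with fraction field K and R ≠ K. If the R-adic topology on K is a field topology (equivalently, inversion x ↦ x⁻¹ is continuous on K^× for the R-adic topology), then the Jacobson radical J(R) of R is nonzero. -/
open Topology

/-- A basic set containing `x` is `x + aR`. -/
lemma adic_shift {K : Type*} [Field K] (R : Subring K) {a b x : K}
    (hx : ∃ r ∈ R, x = a * r + b) :
    {y : K | ∃ r ∈ R, y = a * r + b} = {y : K | ∃ r ∈ R, y = a * r + x} := by
  obtain ⟨r0, hr0, rfl⟩ := hx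
  ext y
  constructor
  · rintro ⟨r, hr, rfl⟩
    exact ⟨r - r0, sub_mem hr hr0, by ring⟩
  · rintro ⟨r, hr, rfl⟩
    exact ⟨r + r0, add_mem hr hr0, by ring⟩

/-- Every principal fractional set `aR` contains `cR` with `c ∈ R`, `c ≠ 0`. -/
lemma adic_refine {K : Type*} [Field K] (R : Subring K)
    (hRfrac : ∀ x : K, ∃ a ∈ R, ∃ b ∈ R, b ≠ 0 ∧ x = a / b)
    {a : K} (ha : a ≠ 0) :
    ∃ c : K, c ∈ R ∧ c ≠ 0 ∧ ∀ r ∈ R, ∃ r' ∈ R, c * r = a * r' := by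
  obtain ⟨p, hp, q, hq, hq0, rfl⟩ := hRfrac a
  refine ⟨p, hp, fun h => ha (by simp [h]), fun r hr => ⟨q * r, mul_mem hq hr, ?_⟩⟩
  field_simp

lemma adic_isBasis {K : Type*} [Field K] (R : Subring K)
    (hRfrac : ∀ x : K, ∃ a ∈ R, ∃ b ∈ R, b ≠ 0 ∧ x = a / b) :
    @TopologicalSpace.IsTopologicalBasis K (adicTopology R) (adicBasis R) := by
  letI := adicTopology R
  refine ⟨?_, ?_, rfl⟩
  · rintro t₁ ⟨a, b, ha, rfl⟩ t₂ ⟨a', b', ha', rfl⟩ x ⟨hx1, hx2⟩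
    obtain ⟨c, hcR, hc0, hc⟩ := adic_refine R hRfrac ha
    obtain ⟨c', hcR', hc0', hc'⟩ := adic_refine R hRfrac ha'
    refine ⟨{y : K | ∃ r ∈ R, y = (c * c') * r + x}, ⟨c * c', x, mul_ne_zero hc0 hc0', rfl⟩,
      ⟨0, zero_mem _, by ring⟩, ?_⟩
    rintro y ⟨r, hr, rfl⟩
    constructor
    · rw [adic_shift R hx1]
      obtain ⟨r', hr', hce⟩ := hc (c' * r) (mul_mem hcR' hr)
      exact ⟨r', hr', by rw [← hce]; ring⟩
    · rw [adic_shift R hx2]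
      obtain ⟨r', hr', hce⟩ := hc' (c * r) (mul_mem hcR hr)
      exact ⟨r', hr', by rw [← hce]; ring⟩
  · refine Set.eq_univ_of_forall fun x => ?_
    exact Set.mem_sUnion.2 ⟨{y : K | ∃ r ∈ R, y = 1 * r + x}, ⟨1, x, one_ne_zero, rfl⟩,
      ⟨0, zero_mem _, by ring⟩⟩

/-- Let `R` be a domain with fraction field `K` and `R ≠ K`. If the `R`-adic
topology on `K` is a field topology — equivalently, inversion is continuous at every
nonzero point of `K` for the `R`-adic topology — then the Jacobson radical of `R` is
nonzero. -/
theorem statement19 {K : Type*} [Field K] (R : Subring K) (hR : R ≠ ⊤)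
    (hRfrac : ∀ x : K, ∃ a ∈ R, ∃ b ∈ R, b ≠ 0 ∧ x = a / b)
    (hinv : ∀ x : K, x ≠ 0 →
      @ContinuousAt K K (adicTopology R) (adicTopology R) (fun y => y⁻¹) x) :
    (⊥ : Ideal ↥R).jacobson ≠ ⊥ := by
  letI := adicTopology R
  have hbasis := adic_isBasis R hRfrac
  -- R itself is a basic open set
  have hRbasic : (R : Set K) ∈ adicBasis R := by
    refine ⟨1, 0, one_ne_zero, ?_⟩
    ext x
    simp [SetLike.mem_coe]
  have hRnhds : (R : Set K) ∈ 𝓝 (1 : K) :=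
    (hbasis.isOpen hRbasic).mem_nhds (by exact_mod_cast one_mem R)
  have h1 := hinv 1 one_ne_zero
  rw [ContinuousAt] at h1
  simp only [inv_one] at h1
  have hpre : (fun y : K => y⁻¹) ⁻¹' (R : Set K) ∈ 𝓝 (1 : K) := h1 hRnhds
  rw [hbasis.mem_nhds_iff] at hpre
  obtain ⟨s, ⟨a, b, ha, rfl⟩, hx1, hsub⟩ := hpre
  obtain ⟨c, hcR, hc0, hc⟩ := adic_refine R hRfrac ha
  -- For every r ∈ R, (1 + c*r)⁻¹ ∈ R
  have key : ∀ r ∈ R, (1 + c * r)⁻¹ ∈ R := by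
    intro r hr
    obtain ⟨r', hr', hce⟩ := hc r hr
    have : (1 + c * r) ∈ {y : K | ∃ t ∈ R, y = a * t + b} := by
      rw [adic_shift R hx1]
      exact ⟨r', hr', by rw [← hce]; ring⟩
    exact hsub this
  -- Case 1: some 1 + c*r = 0, i.e. c is a unit; then R = K, contradiction.
  by_cases hz : ∃ r ∈ R, 1 + c * r = 0
  · exfalso
    obtain ⟨r0, hr0, hr0z⟩ := hz
    -- c * (-r0) = 1
    have hcu : c * (-r0) = 1 := by linear_combination -hr0z
    apply hR
    rw [Subring.eq_top_iff']
    intro x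
    obtain ⟨p, hp, q, hq, hq0, rfl⟩ := hRfrac x
    -- q⁻¹ ∈ R : q = 1 + c * ((-r0) * (q - 1))
    have hqinv : q⁻¹ ∈ R := by
      have hmem : (-r0) * (q - 1) ∈ R := mul_mem (neg_mem hr0) (sub_mem hq (one_mem R))
      have := key _ hmem
      have heq : 1 + c * ((-r0) * (q - 1)) = q := by
        rw [← mul_assoc, hcu]; ring
      rwa [heq] at this
    have : p / q = p * q⁻¹ := div_eq_mul_inv p q
    rw [this]
    exact mul_mem hp hqinv
  · -- Case 2: 1 + c*r ≠ 0 always; then c ∈ J(R), c ≠ 0.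
    push_neg at hz
    intro hJ
    have hcmem : (⟨c, hcR⟩ : ↥R) ∈ (⊥ : Ideal ↥R).jacobson := by
      rw [Ideal.mem_jacobson_bot]
      intro y
      have hy : (y : K) ∈ R := y.2
      have hne : (1 : K) + c * y ≠ 0 := hz y hy
      have hinvR : ((1 : K) + c * y)⁻¹ ∈ R := key y hy
      rw [isUnit_iff_exists_inv]
      refine ⟨⟨(1 + c * (y : K))⁻¹, hinvR⟩, ?_⟩
      ext
      push_cast
      field_simp
      ring
    rw [hJ] at hcmem
    exact hc0 (by simpa using Subtype.ext_iff.1 hcmem)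
end
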